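/- arXiv:2108.11632 — 5 statements merged into one kernel-verified Lean document; each statement's English description precedes it below -/
import Mathlib

section
/- Let n ≥ 1 be an integer and let d be a real number with 0 < d < 1. Then Σ_{k=1}^{n−1} min(1, k/(nd)) = (1/2)·(1 − ψ(nd)/(nd) − nd) + (n − 1). -/
/-!
Put `m = ⌊x⌋₊`. The terms with `k ≤ m` equal `k / x` and add up to `m (m + 1) / (2x)`, the
remaining `N - 1 - m` terms equal `1`. Substituting `m = x - fract x` and
`psi x = fract x - (fract x)²` turns this into the closed form.
-/

noncomputable def psi (x : ℝ) : ℝ := (x - ⌊x⌋) - (x - ⌊x⌋) ^ 2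

open Finset

lemma psi_eq_sub_natFloor {x : ℝ} (hx : 0 ≤ x) :
    psi x = (x - ⌊x⌋₊) - (x - ⌊x⌋₊) ^ 2 := by
  rw [psi, ← Int.natCast_floor_eq_floor hx, Int.cast_natCast]

lemma sum_Ico_one_succ_natCast (m : ℕ) : ∑ k ∈ Ico 1 (m + 1), (k : ℝ) = m * (m + 1) / 2 := by
  induction m with
  | zero => simp
  | succ p ih =>
    rw [sum_Ico_succ_top (by omega), ih]
    push_cast
    ring

lemma sum_Ico_min_one_div_of_lt {x : ℝ} (hx : 0 < x) {N : ℕ} (hxN : x < N) :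
    ∑ k ∈ Ico 1 N, min (1 : ℝ) (k / x) = 1 / 2 * (1 - psi x / x - x) + (N - 1) := by
  set m := ⌊x⌋₊
  have hmN : m + 1 ≤ N := Nat.floor_lt hx.le |>.mpr hxN
  have below : ∑ k ∈ Ico 1 (m + 1), min (1 : ℝ) (k / x) = m * (m + 1) / 2 / x := by
    rw [← sum_Ico_one_succ_natCast, sum_div]
    refine sum_congr rfl fun k hk => min_eq_right ?_
    rw [div_le_one hx]
    exact Nat.le_floor_iff hx.le |>.mp (Nat.lt_succ_iff.mp (mem_Ico.mp hk).2)
  have above : ∑ k ∈ Ico (m + 1) N, min (1 : ℝ) (k / x) = (N : ℝ) - (m + 1) := by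
    rw [sum_congr rfl fun k hk => min_eq_left ((one_le_div hx).mpr ?_), sum_const,
      Nat.card_Ico, nsmul_one, Nat.cast_sub hmN, Nat.cast_succ]
    exact (Nat.lt_floor_add_one x).le.trans (by exact_mod_cast (mem_Ico.mp hk).1)
  rw [← sum_Ico_consecutive _ (by omega) hmN, below, above, psi_eq_sub_natFloor hx.le]
  field_simp
  ring

theorem stmt4 (n : ℕ) (hn : 1 ≤ n) (d : ℝ) (hd0 : 0 < d) (hd1 : d < 1) :
    (∑ k ∈ Finset.Ico 1 n, min (1:ℝ) (k / (n * d)))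
      = (1/2) * (1 - psi (n * d) / (n * d) - n * d) + (n - 1) := by
  have hn0 : (0 : ℝ) < n := by exact_mod_cast hn
  exact sum_Ico_min_one_div_of_lt (mul_pos hn0 hd0) (mul_lt_of_lt_one_right hn0 hd1)
end

section
/- Let α = 1, so that f_1(x) = 1/(π(1+x²)) is the standard Cauchy density and f_{1,t}(x) = t/(π(t²+x²)). Let 0 < r < s ≤ 1. Then lim_{z→∞} [π²(z/r)² / log(z/r)] · ∫_0^∞ x f_1(x) ρ_{r,s}(xz) dx = 1/r. -/
/-!
Write `G(z, v) = ∫₀^∞ x f₁(x) f_{1,r}(xz + v) dx` (`cauchyMoment r z v`). Partial fractions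
give a logarithmic primitive for `v = 0`, so `G(z, 0) = r log(z/r) / (π²(z² − r²))`, while
`0 ≤ G(z, 0) − G(z, v) ≤ C(v)/z²` is negligible against `log z / z²`; hence every `G(z, v)`,
normalised, tends to `1/r`. Exchanging the integrals in the definition of `ρ_{r,s}` turns the
quantity into `½ G(z, 0) + ∫₀^∞ G(z, v) f_{1,s−r}(v) dv`, dominated convergence applies because
`G(z, v) ≤ G(z, 0)`, and `∫₀^∞ f_{1,s−r} = ½` gives the limit `½ · 1/r + ½ · 1/r`.
-/

open MeasureTheory Real Filter

noncomputable def cauchyDensity (x : ℝ) : ℝ := 1 / (π * (1 + x ^ 2))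

noncomputable def cauchyDensityT (t x : ℝ) : ℝ := t / (π * (t ^ 2 + x ^ 2))

noncomputable def cauchyRho (r s u : ℝ) : ℝ :=
  (1/2) * cauchyDensityT r u +
    ∫ v in Set.Ioi (0:ℝ), cauchyDensityT r (u + v) * cauchyDensityT (s - r) v

open Set

section HalfLineIntegrals

variable {a c : ℝ}

lemma hasDerivAt_arctan_mul_div (ha : 0 < a) (hc : 0 < c) (x : ℝ) :
    HasDerivAt (fun x ↦ arctan (c * x / a) / (a * c)) (a ^ 2 + c ^ 2 * x ^ 2)⁻¹ x := by
  have h := ((((hasDerivAt_id x).const_mul c).div_const a).arctan).div_const (a * c)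
  refine h.congr_deriv ?_
  simp only [id]
  field_simp

lemma tendsto_arctan_mul_div (ha : 0 < a) (hc : 0 < c) :
    Tendsto (fun x ↦ arctan (c * x / a) / (a * c)) atTop (nhds (π / 2 / (a * c))) :=
  ((tendsto_arctan_atTop.mono_right nhdsWithin_le_nhds).comp
    ((tendsto_id.const_mul_atTop hc).atTop_div_const ha)).div_const _

lemma integrableOn_Ioi_inv_quad (ha : 0 < a) (hc : 0 < c) :
    IntegrableOn (fun x : ℝ ↦ (a ^ 2 + c ^ 2 * x ^ 2)⁻¹) (Ioi 0) :=
  integrableOn_Ioi_deriv_of_nonneg' (fun x _ ↦ hasDerivAt_arctan_mul_div ha hc x)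
    (fun x _ ↦ by positivity) (tendsto_arctan_mul_div ha hc)

lemma integral_Ioi_inv_quad (ha : 0 < a) (hc : 0 < c) :
    ∫ x in Ioi 0, (a ^ 2 + c ^ 2 * x ^ 2)⁻¹ = π / (2 * a * c) := by
  rw [integral_Ioi_of_hasDerivAt_of_nonneg' (fun x _ ↦ hasDerivAt_arctan_mul_div ha hc x)
    (fun x _ ↦ by positivity) (tendsto_arctan_mul_div ha hc)]
  simp only [mul_zero, zero_div, arctan_zero, sub_zero]
  ring

lemma hasDerivAt_inv_quad (ha : 0 < a) (hc : 0 < c) (x : ℝ) :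
    HasDerivAt (fun x ↦ -(a ^ 2 + c ^ 2 * x ^ 2)⁻¹ / (2 * c ^ 2))
      (x * ((a ^ 2 + c ^ 2 * x ^ 2) ^ 2)⁻¹) x := by
  have hq : HasDerivAt (fun x ↦ a ^ 2 + c ^ 2 * x ^ 2) (c ^ 2 * (2 * x)) x := by
    simpa using ((hasDerivAt_pow 2 x).const_mul (c ^ 2)).const_add (a ^ 2)
  refine ((hq.inv (by positivity)).neg.div_const _).congr_deriv ?_
  field_simp

lemma tendsto_inv_quad (hc : 0 < c) :
    Tendsto (fun x : ℝ ↦ -(a ^ 2 + c ^ 2 * x ^ 2)⁻¹ / (2 * c ^ 2)) atTop (nhds 0) := by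
  have hq : Tendsto (fun x : ℝ ↦ a ^ 2 + c ^ 2 * x ^ 2) atTop atTop :=
    tendsto_atTop_add_const_left _ _
      ((tendsto_pow_atTop two_ne_zero).const_mul_atTop (by positivity))
  simpa using (hq.inv_tendsto_atTop.neg).div_const (2 * c ^ 2)

lemma integrableOn_Ioi_mul_inv_quad_sq (ha : 0 < a) (hc : 0 < c) :
    IntegrableOn (fun x : ℝ ↦ x * ((a ^ 2 + c ^ 2 * x ^ 2) ^ 2)⁻¹) (Ioi 0) :=
  integrableOn_Ioi_deriv_of_nonneg' (fun x _ ↦ hasDerivAt_inv_quad ha hc x)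
    (fun x (hx : 0 < x) ↦ by positivity) (tendsto_inv_quad hc)

lemma integral_Ioi_mul_inv_quad_sq (ha : 0 < a) (hc : 0 < c) :
    ∫ x in Ioi 0, x * ((a ^ 2 + c ^ 2 * x ^ 2) ^ 2)⁻¹ = 1 / (2 * a ^ 2 * c ^ 2) := by
  rw [integral_Ioi_of_hasDerivAt_of_nonneg' (fun x _ ↦ hasDerivAt_inv_quad ha hc x)
    (fun x (hx : 0 < x) ↦ by positivity) (tendsto_inv_quad hc)]
  field_simp
  ring

end HalfLineIntegrals

section CauchyDensity

variable {t : ℝ}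

lemma cauchyDensity_nonneg (x : ℝ) : 0 ≤ cauchyDensity x := by
  unfold cauchyDensity; positivity

lemma mul_cauchyDensity_le {x : ℝ} (hx : 0 ≤ x) : x * cauchyDensity x ≤ x / π := by
  rw [cauchyDensity, mul_one_div]
  exact div_le_div_of_nonneg_left hx pi_pos (by nlinarith [pi_pos])

lemma continuous_cauchyDensity : Continuous cauchyDensity :=
  continuous_const.div (by fun_prop) fun x ↦ by positivity

lemma cauchyDensityT_nonneg (ht : 0 ≤ t) (x : ℝ) : 0 ≤ cauchyDensityT t x := by
  unfold cauchyDensityT; positivity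

lemma cauchyDensityT_add_le (ht : 0 < t) {u v : ℝ} (hu : 0 ≤ u) (hv : 0 ≤ v) :
    cauchyDensityT t (u + v) ≤ cauchyDensityT t u := by
  refine div_le_div_of_nonneg_left ht.le (by positivity) ?_
  gcongr
  nlinarith

lemma continuous_cauchyDensityT (ht : t ≠ 0) : Continuous (cauchyDensityT t) :=
  continuous_const.div (by fun_prop) fun x ↦ by positivity

lemma cauchyDensityT_eq_mul_inv_quad (t x : ℝ) :
    cauchyDensityT t x = t / π * (t ^ 2 + 1 ^ 2 * x ^ 2)⁻¹ := by
  rw [cauchyDensityT, one_pow, one_mul, div_mul_eq_div_div, div_eq_mul_inv]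

lemma integrableOn_Ioi_cauchyDensityT (ht : 0 < t) : IntegrableOn (cauchyDensityT t) (Ioi 0) := by
  simp only [funext (cauchyDensityT_eq_mul_inv_quad t)]
  exact (integrableOn_Ioi_inv_quad ht one_pos).const_mul _

lemma integral_Ioi_cauchyDensityT (ht : 0 < t) : ∫ x in Ioi 0, cauchyDensityT t x = 1 / 2 := by
  simp only [cauchyDensityT_eq_mul_inv_quad t]
  rw [integral_const_mul, integral_Ioi_inv_quad ht one_pos]
  field_simp [pi_pos.ne']

lemma cauchyDensityT_sub_cauchyDensityT_add_le (ht : 0 < t) {u v : ℝ} (hu : 0 ≤ u)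
    (hv : 0 ≤ v) : cauchyDensityT t u - cauchyDensityT t (u + v)
      ≤ t * (2 * u * v + v ^ 2) / (π * (t ^ 2 + u ^ 2) ^ 2) := by
  have hdiff : cauchyDensityT t u - cauchyDensityT t (u + v)
      = t * (2 * u * v + v ^ 2) / (π * ((t ^ 2 + u ^ 2) * (t ^ 2 + (u + v) ^ 2))) := by
    unfold cauchyDensityT
    field_simp
    ring
  rw [hdiff, sq (t ^ 2 + u ^ 2)]
  refine div_le_div_of_nonneg_left (by positivity) (by positivity) ?_
  gcongr
  nlinarith

end CauchyDensity

noncomputable def cauchyMoment (r z v : ℝ) : ℝ :=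
  ∫ x in Ioi 0, x * cauchyDensity x * cauchyDensityT r (x * z + v)

section CauchyMoment

variable {r z v : ℝ}

lemma mul_cauchyDensity_mul_cauchyDensityT_nonneg (hr : 0 ≤ r) {x : ℝ} (hx : 0 ≤ x)
    (y : ℝ) : 0 ≤ x * cauchyDensity x * cauchyDensityT r y :=
  mul_nonneg (mul_nonneg hx (cauchyDensity_nonneg x)) (cauchyDensityT_nonneg hr y)

lemma hasDerivAt_cauchyMoment_primitive (hr : 0 < r) (hz : r < z) (x : ℝ) :
    HasDerivAt
      (fun x ↦ r / (2 * π ^ 2 * (z ^ 2 - r ^ 2))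
        * (log (r ^ 2 + z ^ 2 * x ^ 2) - log (1 + x ^ 2)))
      (x * cauchyDensity x * cauchyDensityT r (x * z)) x := by
  have hz0 : 0 < z := hr.trans hz
  have hzr : z ^ 2 - r ^ 2 ≠ 0 := by nlinarith
  have hq : HasDerivAt (fun x ↦ r ^ 2 + z ^ 2 * x ^ 2) (z ^ 2 * (2 * x)) x := by
    simpa using ((hasDerivAt_pow 2 x).const_mul (z ^ 2)).const_add (r ^ 2)
  have hp : HasDerivAt (fun x ↦ 1 + x ^ 2) (2 * x) x := by
    simpa using (hasDerivAt_pow 2 x).const_add 1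
  refine (((hq.log (by positivity)).sub (hp.log (by positivity))).const_mul _).congr_deriv ?_
  unfold cauchyDensity cauchyDensityT
  field_simp
  ring

lemma tendsto_cauchyMoment_primitive (hr : 0 < r) (hz : r < z) :
    Tendsto
      (fun x ↦ r / (2 * π ^ 2 * (z ^ 2 - r ^ 2))
        * (log (r ^ 2 + z ^ 2 * x ^ 2) - log (1 + x ^ 2)))
      atTop (nhds (r / (2 * π ^ 2 * (z ^ 2 - r ^ 2)) * log (z ^ 2))) := by
  have hz0 : 0 < z := hr.trans hz
  refine Tendsto.const_mul _ ?_
  have hratio :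
      Tendsto (fun x : ℝ ↦ z ^ 2 + (r ^ 2 - z ^ 2) / (1 + x ^ 2)) atTop (nhds (z ^ 2)) := by
    simpa using tendsto_const_nhds.add (tendsto_const_nhds.div_atTop
      (tendsto_atTop_add_const_left _ _ (tendsto_pow_atTop (α := ℝ) two_ne_zero)))
  refine ((continuousAt_log (by positivity)).tendsto.comp hratio).congr fun x ↦ ?_
  have hp : (0 : ℝ) < 1 + x ^ 2 := by positivity
  rw [Function.comp_apply, ← log_div (by positivity) hp.ne']
  congr 1
  field_simp
  ring

lemma integrableOn_cauchyMoment_zero_integrand (hr : 0 < r) (hz : r < z) :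
    IntegrableOn (fun x ↦ x * cauchyDensity x * cauchyDensityT r (x * z)) (Ioi 0) :=
  integrableOn_Ioi_deriv_of_nonneg' (fun x _ ↦ hasDerivAt_cauchyMoment_primitive hr hz x)
    (fun _ hx ↦ mul_cauchyDensity_mul_cauchyDensityT_nonneg hr.le (le_of_lt hx) _)
    (tendsto_cauchyMoment_primitive hr hz)

lemma cauchyMoment_zero (hr : 0 < r) (hz : r < z) :
    cauchyMoment r z 0 = r * log (z / r) / (π ^ 2 * (z ^ 2 - r ^ 2)) := by
  simp only [cauchyMoment, add_zero]
  rw [integral_Ioi_of_hasDerivAt_of_nonneg' (fun x _ ↦ hasDerivAt_cauchyMoment_primitive hr hz x)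
    (fun _ hx ↦ mul_cauchyDensity_mul_cauchyDensityT_nonneg hr.le (le_of_lt hx) _)
    (tendsto_cauchyMoment_primitive hr hz)]
  have hzr : z ^ 2 - r ^ 2 ≠ 0 := by nlinarith
  rw [log_div (hr.trans hz).ne' hr.ne']
  simp only [zero_pow two_ne_zero, mul_zero, add_zero, log_one, sub_zero, log_pow, Nat.cast_ofNat]
  field_simp [pi_pos.ne']

lemma integrableOn_cauchyMoment_integrand (hr : 0 < r) (hz : r < z) (hv : 0 ≤ v) :
    IntegrableOn (fun x ↦ x * cauchyDensity x * cauchyDensityT r (x * z + v)) (Ioi 0) := by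
  refine (integrableOn_cauchyMoment_zero_integrand hr hz).mono'
    (Continuous.aestronglyMeasurable ?_) ?_
  · exact (continuous_id.mul continuous_cauchyDensity).mul
      ((continuous_cauchyDensityT hr.ne').comp (by fun_prop))
  · filter_upwards [ae_restrict_mem measurableSet_Ioi] with x (hx : 0 < x)
    rw [Real.norm_of_nonneg (mul_cauchyDensity_mul_cauchyDensityT_nonneg hr.le hx.le _)]
    exact mul_le_mul_of_nonneg_left (cauchyDensityT_add_le hr (by nlinarith) hv)
      (mul_nonneg hx.le (cauchyDensity_nonneg x))

lemma cauchyMoment_nonneg (hr : 0 ≤ r) : 0 ≤ cauchyMoment r z v :=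
  setIntegral_nonneg measurableSet_Ioi fun _ hx ↦
    mul_cauchyDensity_mul_cauchyDensityT_nonneg hr (le_of_lt hx) _

lemma cauchyMoment_le_cauchyMoment_zero (hr : 0 < r) (hz : r < z) (hv : 0 ≤ v) :
    cauchyMoment r z v ≤ cauchyMoment r z 0 := by
  refine setIntegral_mono_on (integrableOn_cauchyMoment_integrand hr hz hv)
    (integrableOn_cauchyMoment_integrand hr hz le_rfl) measurableSet_Ioi fun x (hx : 0 < x) ↦ ?_
  rw [add_zero]
  exact mul_le_mul_of_nonneg_left (cauchyDensityT_add_le hr (by nlinarith) hv)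
    (mul_nonneg hx.le (cauchyDensity_nonneg x))

lemma mul_cauchyDensity_mul_sub_le (hr : 0 < r) (hz : 0 < z) (hv : 0 ≤ v) {x : ℝ} (hx : 0 < x) :
    x * cauchyDensity x * (cauchyDensityT r (x * z) - cauchyDensityT r (x * z + v))
      ≤ r / π ^ 2 * (2 * v / z * (r ^ 2 + z ^ 2 * x ^ 2)⁻¹
        + v ^ 2 * (x * ((r ^ 2 + z ^ 2 * x ^ 2) ^ 2)⁻¹)) := by
  have hxz : 0 ≤ x * z := by positivity
  calc x * cauchyDensity x * (cauchyDensityT r (x * z) - cauchyDensityT r (x * z + v))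
      ≤ x / π * (r * (2 * (x * z) * v + v ^ 2) / (π * (r ^ 2 + (x * z) ^ 2) ^ 2)) :=
        mul_le_mul (mul_cauchyDensity_le hx.le) (cauchyDensityT_sub_cauchyDensityT_add_le hr hxz hv)
          (by linarith [cauchyDensityT_add_le hr hxz hv]) (by positivity)
    _ ≤ _ := by
        have hq : 0 < r ^ 2 + z ^ 2 * x ^ 2 := by positivity
        rw [← sub_nonneg]
        have key : r / π ^ 2 * (2 * v / z * (r ^ 2 + z ^ 2 * x ^ 2)⁻¹
            + v ^ 2 * (x * ((r ^ 2 + z ^ 2 * x ^ 2) ^ 2)⁻¹))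
            - x / π * (r * (2 * (x * z) * v + v ^ 2) / (π * (r ^ 2 + (x * z) ^ 2) ^ 2))
            = 2 * r ^ 3 * v / (π ^ 2 * z * (r ^ 2 + z ^ 2 * x ^ 2) ^ 2) := by
          field_simp
          ring
        rw [key]
        positivity

lemma cauchyMoment_zero_sub_le (hr : 0 < r) (hz : r < z) (hv : 0 ≤ v) :
    cauchyMoment r z 0 - cauchyMoment r z v ≤ (v / π + v ^ 2 / (2 * π ^ 2 * r)) / z ^ 2 := by
  have hz0 : 0 < z := hr.trans hz
  have hquad := integrableOn_Ioi_inv_quad hr hz0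
  have hquad2 := integrableOn_Ioi_mul_inv_quad_sq hr hz0
  have hbound : ∫ x in Ioi 0, r / π ^ 2 * (2 * v / z * (r ^ 2 + z ^ 2 * x ^ 2)⁻¹
      + v ^ 2 * (x * ((r ^ 2 + z ^ 2 * x ^ 2) ^ 2)⁻¹))
      = (v / π + v ^ 2 / (2 * π ^ 2 * r)) / z ^ 2 := by
    rw [integral_const_mul, integral_add (hquad.const_mul _) (hquad2.const_mul _),
      integral_const_mul, integral_const_mul, integral_Ioi_inv_quad hr hz0,
      integral_Ioi_mul_inv_quad_sq hr hz0]
    field_simp [pi_pos.ne']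
  have h₀ := integrableOn_cauchyMoment_integrand hr hz le_rfl
  have hᵥ := integrableOn_cauchyMoment_integrand hr hz hv
  rw [← hbound, cauchyMoment, cauchyMoment, ← integral_sub h₀ hᵥ]
  refine setIntegral_mono_on (h₀.sub hᵥ)
    (((hquad.const_mul _).add (hquad2.const_mul _)).const_mul _)
    measurableSet_Ioi fun x (hx : 0 < x) ↦ ?_
  rw [add_zero, ← mul_sub]
  exact mul_cauchyDensity_mul_sub_le hr hz0 hv hx

end CauchyMoment

noncomputable def momentScale (r z : ℝ) : ℝ := π ^ 2 * (z / r) ^ 2 / log (z / r)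

section MomentScale

variable {r z : ℝ}

lemma momentScale_nonneg (hr : 0 < r) (hz : r ≤ z) : 0 ≤ momentScale r z :=
  div_nonneg (by positivity) (log_nonneg ((one_le_div hr).2 hz))

lemma momentScale_mul_cauchyMoment_zero (hr : 0 < r) (hz : r < z) :
    momentScale r z * cauchyMoment r z 0 = 1 / (r * (1 - (r / z) ^ 2)) := by
  have hz0 : 0 < z := hr.trans hz
  have hlog : log (z / r) ≠ 0 := (log_pos ((one_lt_div hr).2 hz)).ne'
  have hzr : z ^ 2 - r ^ 2 ≠ 0 := by nlinarith
  rw [momentScale, cauchyMoment_zero hr hz]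
  field_simp [pi_pos.ne']

lemma tendsto_momentScale_mul_cauchyMoment_zero (hr : 0 < r) :
    Tendsto (fun z ↦ momentScale r z * cauchyMoment r z 0) atTop (nhds (1 / r)) := by
  have hlim :
      Tendsto (fun z ↦ 1 / (r * (1 - (r / z) ^ 2))) atTop (nhds (1 / (r * (1 - 0 ^ 2)))) :=
    tendsto_const_nhds.div
      ((((tendsto_const_nhds.div_atTop tendsto_id).pow 2).const_sub 1).const_mul r)
      (by simp [hr.ne'])
  rw [zero_pow two_ne_zero, sub_zero, mul_one] at hlim
  exact hlim.congr' (eventually_gt_atTop r |>.mono fun z hz ↦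
    (momentScale_mul_cauchyMoment_zero hr hz).symm)

lemma momentScale_mul_cauchyMoment_zero_le (hr : 0 < r) (hz : 2 * r ≤ z) :
    momentScale r z * cauchyMoment r z 0 ≤ 2 / r := by
  have hz0 : 0 < z := by linarith
  rw [momentScale_mul_cauchyMoment_zero hr (by linarith)]
  have hrz : r / z ≤ 1 / 2 := by rw [div_le_iff₀ hz0]; linarith
  have hrz0 : 0 ≤ r / z := by positivity
  have hsq : (r / z) ^ 2 ≤ 1 / 4 := by nlinarith
  rw [div_le_div_iff₀ (by nlinarith) hr]
  nlinarith

lemma tendsto_momentScale_mul_div_sq (hr : 0 < r) (C : ℝ) :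
    Tendsto (fun z ↦ momentScale r z * (C / z ^ 2)) atTop (nhds 0) := by
  have hlog : Tendsto (fun z ↦ log (z / r)) atTop atTop :=
    tendsto_log_atTop.comp (tendsto_id.atTop_div_const hr)
  refine (tendsto_const_nhds.div_atTop hlog (f := fun _ ↦ π ^ 2 * C / r ^ 2)).congr' ?_
  filter_upwards [eventually_gt_atTop 0] with z hz
  rw [momentScale]
  field_simp

lemma tendsto_momentScale_mul_cauchyMoment (hr : 0 < r) {v : ℝ} (hv : 0 ≤ v) :
    Tendsto (fun z ↦ momentScale r z * cauchyMoment r z v) atTop (nhds (1 / r)) := by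
  have hlower := (tendsto_momentScale_mul_cauchyMoment_zero hr).sub
    (tendsto_momentScale_mul_div_sq hr (v / π + v ^ 2 / (2 * π ^ 2 * r)))
  rw [sub_zero] at hlower
  refine tendsto_of_tendsto_of_tendsto_of_le_of_le' hlower
    (tendsto_momentScale_mul_cauchyMoment_zero hr) ?_ ?_ <;>
    filter_upwards [eventually_gt_atTop r] with z hz
  · rw [← mul_sub]
    exact mul_le_mul_of_nonneg_left (by linarith [cauchyMoment_zero_sub_le hr hz hv])
      (momentScale_nonneg hr hz.le)
  · exact mul_le_mul_of_nonneg_left (cauchyMoment_le_cauchyMoment_zero hr hz hv)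
      (momentScale_nonneg hr hz.le)

end MomentScale

section Decomposition

variable {r z b : ℝ}

lemma integrable_cauchyMoment_prod_integrand (hr : 0 < r) (hz : r < z) (hb : 0 < b) :
    Integrable (fun p : ℝ × ℝ ↦
        p.1 * cauchyDensity p.1 * cauchyDensityT r (p.1 * z + p.2) * cauchyDensityT b p.2)
      ((volume.restrict (Ioi 0)).prod (volume.restrict (Ioi 0))) := by
  have hdom := (integrableOn_cauchyMoment_integrand hr hz le_rfl).mul_prod
    (integrableOn_Ioi_cauchyDensityT hb)
  refine hdom.mono' (Continuous.aestronglyMeasurable ?_) ?_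
  · exact ((continuous_fst.mul (continuous_cauchyDensity.comp continuous_fst)).mul
      ((continuous_cauchyDensityT hr.ne').comp (by fun_prop))).mul
      ((continuous_cauchyDensityT hb.ne').comp continuous_snd)
  rw [Measure.prod_restrict]
  filter_upwards [ae_restrict_mem (measurableSet_Ioi.prod measurableSet_Ioi)]
    with ⟨x, v⟩ ⟨hx, hv⟩
  simp only [mem_Ioi] at hx hv
  rw [Real.norm_of_nonneg (mul_nonneg (mul_cauchyDensity_mul_cauchyDensityT_nonneg hr.le hx.le _)
    (cauchyDensityT_nonneg hb.le _)), add_zero]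
  exact mul_le_mul_of_nonneg_right (mul_le_mul_of_nonneg_left
    (cauchyDensityT_add_le hr (by nlinarith) hv.le) (mul_nonneg hx.le (cauchyDensity_nonneg x)))
    (cauchyDensityT_nonneg hb.le _)

lemma integral_mul_cauchyRho {s : ℝ} (hr : 0 < r) (hz : r < z) (hrs : r < s) :
    ∫ x in Ioi 0, x * cauchyDensity x * cauchyRho r s (x * z)
      = 1 / 2 * cauchyMoment r z 0
        + ∫ v in Ioi 0, cauchyMoment r z v * cauchyDensityT (s - r) v := by
  have hprod := integrable_cauchyMoment_prod_integrand hr hz (sub_pos.2 hrs)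
  have hsplit : ∀ x, x * cauchyDensity x * cauchyRho r s (x * z)
      = 1 / 2 * (x * cauchyDensity x * cauchyDensityT r (x * z + 0))
        + ∫ v in Ioi 0,
            x * cauchyDensity x * cauchyDensityT r (x * z + v) * cauchyDensityT (s - r) v := by
    intro x
    simp only [cauchyRho, add_zero, mul_assoc, integral_const_mul]
    ring
  simp only [hsplit]
  rw [integral_add ((integrableOn_cauchyMoment_integrand hr hz le_rfl).const_mul _)
    hprod.integral_prod_left, integral_const_mul, integral_integral_swap hprod]
  simp only [integral_mul_const, cauchyMoment]

lemma tendsto_momentScale_mul_integral_cauchyMoment (hr : 0 < r) (hb : 0 < b) :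
    Tendsto (fun z ↦ momentScale r z * ∫ v in Ioi 0, cauchyMoment r z v * cauchyDensityT b v)
      atTop (nhds (1 / (2 * r))) := by
  have hlim : Tendsto
      (fun z ↦ ∫ v in Ioi 0, momentScale r z * cauchyMoment r z v * cauchyDensityT b v) atTop
      (nhds (∫ v in Ioi 0, 1 / r * cauchyDensityT b v)) := by
    refine tendsto_integral_filter_of_dominated_convergence (fun v ↦ 2 / r * cauchyDensityT b v)
      ?_ ?_ ((integrableOn_Ioi_cauchyDensityT hb).const_mul _) ?_
    · filter_upwards [eventually_gt_atTop r] with z hz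
      exact ((integrable_cauchyMoment_prod_integrand hr hz hb).integral_prod_right.const_mul
        (momentScale r z)).aestronglyMeasurable.congr (.of_forall fun v ↦ by
          dsimp only; rw [integral_mul_const, cauchyMoment, mul_assoc])
    · filter_upwards [eventually_ge_atTop (2 * r)] with z hz
      filter_upwards [ae_restrict_mem measurableSet_Ioi] with v (hv : 0 < v)
      have hscaled : momentScale r z * cauchyMoment r z v ≤ 2 / r :=
        (mul_le_mul_of_nonneg_left (cauchyMoment_le_cauchyMoment_zero hr (by linarith) hv.le)
          (momentScale_nonneg hr (by linarith))).trans (momentScale_mul_cauchyMoment_zero_le hr hz)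
      rw [Real.norm_of_nonneg (mul_nonneg (mul_nonneg (momentScale_nonneg hr (by linarith))
        (cauchyMoment_nonneg hr.le)) (cauchyDensityT_nonneg hb.le v))]
      exact mul_le_mul_of_nonneg_right hscaled (cauchyDensityT_nonneg hb.le v)
    · filter_upwards [ae_restrict_mem measurableSet_Ioi] with v (hv : 0 < v)
      exact (tendsto_momentScale_mul_cauchyMoment hr hv.le).mul_const _
  rw [integral_const_mul, integral_Ioi_cauchyDensityT hb, one_div_mul_one_div, mul_comm] at hlim
  simpa only [mul_assoc, integral_const_mul] using hlim

end Decomposition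

theorem stmt7_general (r s : ℝ) (hr : 0 < r) (hrs : r < s) :
    Tendsto (fun z : ℝ =>
        (π ^ 2 * (z / r) ^ 2 / Real.log (z / r)) *
          ∫ x in Set.Ioi (0:ℝ), x * cauchyDensity x * cauchyRho r s (x * z))
      atTop (nhds (1 / r)) := by
  have hlim := ((tendsto_momentScale_mul_cauchyMoment_zero hr).const_mul (1 / 2)).add
    (tendsto_momentScale_mul_integral_cauchyMoment hr (sub_pos.2 hrs))
  rw [show 1 / 2 * (1 / r) + 1 / (2 * r) = 1 / r by ring] at hlim
  refine hlim.congr' ?_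
  filter_upwards [eventually_gt_atTop r] with z hz
  rw [integral_mul_cauchyRho hr hz hrs, momentScale]
  ring

theorem stmt7 (r s : ℝ) (hr : 0 < r) (hrs : r < s) (hs : s ≤ 1) :
    Tendsto (fun z : ℝ =>
        (π ^ 2 * (z / r) ^ 2 / Real.log (z / r)) *
          ∫ x in Set.Ioi (0:ℝ), x * cauchyDensity x * cauchyRho r s (x * z))
      atTop (nhds (1 / r)) :=
  stmt7_general r s hr hrs
end

section
/- Let α = 1, so that f_1(x) = 1/(π(1+x²)) and f_D(x) = x^{−2} g_1((x^{−1}−1)) with g_1(b) = 4∫₀^∞ y f_1(y) f_1(by) dy. Then for every 0 < x < 1 with x ≠ 1/2, f_D(x) = (4/π²) · (1−2x)^{−1} · log(x^{−1} − 1). -/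
/-!
By partial fractions in `y²`, the integrand `y f(y) f(by)` has the antiderivative
`(log (1 + b²y²) - log (1 + y²)) / (2π²(b² - 1))`, which vanishes at `0` and tends to
`log b / (π²(b² - 1))` at infinity. For `b = x⁻¹ - 1` one has `b² - 1 = (1 - 2x) / x²`.
-/

open MeasureTheory Real Filter Topology

lemma cauchyDensity_pos (x : ℝ) : 0 < cauchyDensity x := by
  unfold cauchyDensity
  positivity

lemma hasDerivAt_log_one_add_sq_sub_log_one_add_sq {b : ℝ} (hb : b ^ 2 ≠ 1) (y : ℝ) :
    HasDerivAt (fun y => (log (1 + b ^ 2 * y ^ 2) - log (1 + y ^ 2)) / (2 * π ^ 2 * (b ^ 2 - 1)))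
      (y * cauchyDensity y * cauchyDensity (b * y)) y := by
  have hb' : b ^ 2 - 1 ≠ 0 := sub_ne_zero.2 hb
  have h₁ : HasDerivAt (fun y : ℝ => 1 + b ^ 2 * y ^ 2) (b ^ 2 * (2 * y)) y := by
    simpa using ((hasDerivAt_pow 2 y).const_mul (b ^ 2)).const_add 1
  have h₂ : HasDerivAt (fun y : ℝ => 1 + y ^ 2) (2 * y) y := by
    simpa using (hasDerivAt_pow 2 y).const_add 1
  refine (((h₁.log (by positivity)).sub (h₂.log (by positivity))).div_const
    (2 * π ^ 2 * (b ^ 2 - 1))).congr_deriv ?_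
  unfold cauchyDensity
  field_simp
  ring

lemma tendsto_log_one_add_sq_sub_log_one_add_sq_atTop {b : ℝ} (hb : b ≠ 0) :
    Tendsto (fun y => log (1 + b ^ 2 * y ^ 2) - log (1 + y ^ 2)) atTop (𝓝 (log (b ^ 2))) := by
  have hratio : Tendsto (fun y : ℝ => b ^ 2 + (1 - b ^ 2) / (1 + y ^ 2)) atTop (𝓝 (b ^ 2)) := by
    simpa using tendsto_const_nhds.add <| tendsto_const_nhds.div_atTop <|
      tendsto_atTop_add_const_left _ (1 : ℝ) (tendsto_pow_atTop two_ne_zero)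
  refine ((continuousAt_log (pow_ne_zero 2 hb)).tendsto.comp hratio).congr fun y => ?_
  have hy : (0 : ℝ) < 1 + y ^ 2 := by positivity
  rw [Function.comp_apply, ← log_div (by positivity) hy.ne']
  congr 1
  field_simp
  ring

theorem integral_Ioi_mul_cauchyDensity_mul_cauchyDensity {b : ℝ} (hb : b ≠ 0) (hb1 : b ^ 2 ≠ 1) :
    ∫ y in Set.Ioi (0 : ℝ), y * cauchyDensity y * cauchyDensity (b * y)
      = log b / (π ^ 2 * (b ^ 2 - 1)) := by
  have hnonneg : ∀ y ∈ Set.Ioi (0 : ℝ), 0 ≤ y * cauchyDensity y * cauchyDensity (b * y) :=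
    fun y hy => (mul_pos (mul_pos hy (cauchyDensity_pos y)) (cauchyDensity_pos _)).le
  rw [integral_Ioi_of_hasDerivAt_of_nonneg'
    (fun y _ => hasDerivAt_log_one_add_sq_sub_log_one_add_sq hb1 y) hnonneg
    ((tendsto_log_one_add_sq_sub_log_one_add_sq_atTop hb).div_const _)]
  have hb' : b ^ 2 - 1 ≠ 0 := sub_ne_zero.2 hb1
  norm_num [log_pow]
  field_simp

theorem stmt10 (x : ℝ) (hx0 : 0 < x) (hx1 : x < 1) (hx : x ≠ 1/2) :
    (x ^ 2)⁻¹ *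
        (4 * ∫ y in Set.Ioi (0:ℝ), y * cauchyDensity y * cauchyDensity ((x⁻¹ - 1) * y))
      = (4 / π ^ 2) * (1 - 2 * x)⁻¹ * Real.log (x⁻¹ - 1) := by
  have hb : x⁻¹ - 1 ≠ 0 := sub_ne_zero.2 (inv_ne_one.2 hx1.ne)
  have hsq : (x⁻¹ - 1) ^ 2 - 1 = (1 - 2 * x) / x ^ 2 := by
    field_simp
    ring
  have h2x : 1 - 2 * x ≠ 0 := fun h => hx (by linarith)
  have hb1 : (x⁻¹ - 1) ^ 2 ≠ 1 := by
    rw [← sub_ne_zero, hsq]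
    exact div_ne_zero h2x (by positivity)
  rw [integral_Ioi_mul_cauchyDensity_mul_cauchyDensity hb hb1, hsq]
  field_simp
end

section
/- With ψ(x) = (x − ⌊x⌋) − (x − ⌊x⌋)², one has lim_{n→∞} (1/log n) · ∫_0^{n/2} ψ(x) / (x(1 − x/n)) dx = 1/6, where the limit is over integers n → ∞. -/
/-!
For integer `n` one has `ψ(n - x) = ψ(x)`, so after the partial fraction
`1 / (x (1 - x / n)) = 1 / x + 1 / (n - x)` and the substitution `x ↦ n - x` the integral becomes
`∫₀ⁿ ψ(x) / x dx`. Since `ψ ≥ 0` and `∫ₖ^{k+1} ψ = 1/6`, on each `[k, k + 1]` both `∫ ψ(x) / x` and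
`∫ 1 / (6x)` lie between `1 / (6(k + 1))` and `1 / (6k)`; these errors telescope, so
`∫₀ⁿ ψ(x) / x dx = (1/6) log n + O(1)`.
-/

open MeasureTheory Real Filter Set

theorem tendsto_inv_mul_of_abs_sub_mul_le {α : Type*} {l : Filter α} {g u : α → ℝ} {c C : ℝ}
    (hg : Tendsto g l atTop) (h : ∀ᶠ x in l, |u x - c * g x| ≤ C) :
    Tendsto (fun x => (g x)⁻¹ * u x) l (nhds c) := by
  have hC : Tendsto (fun x => C * (g x)⁻¹) l (nhds 0) := by
    simpa using hg.inv_tendsto_atTop.const_mul C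
  rw [← tendsto_sub_nhds_zero_iff]
  refine squeeze_zero_norm' ?_ hC
  filter_upwards [h, hg.eventually_gt_atTop 0] with x hx hgx
  have hsplit : (g x)⁻¹ * u x - c = (g x)⁻¹ * (u x - c * g x) := by field_simp
  rw [Real.norm_eq_abs, hsplit, abs_mul, abs_of_pos (inv_pos.2 hgx), mul_comm]
  exact mul_le_mul_of_nonneg_right hx (inv_nonneg.2 hgx.le)

section UnitIntervals

variable {f : ℝ → ℝ} {c : ℝ}

theorem IntervalIntegrable.div_self_of_pos {a b : ℝ} (ha : 0 < a) (hb : 0 < b)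
    (hf : IntervalIntegrable f volume a b) : IntervalIntegrable (fun x => f x / x) volume a b :=
  hf.mul_continuousOn <| continuousOn_inv₀.mono fun _ hx => ((lt_min ha hb).trans_le hx.1).ne'

theorem integral_div_self_mem_Icc {a : ℝ} (ha : 0 < a) (hf : ∀ x, 0 ≤ f x)
    (hfi : IntervalIntegrable f volume a (a + 1)) :
    ∫ x in a..a + 1, f x / x ∈
      Icc ((∫ x in a..a + 1, f x) / (a + 1)) ((∫ x in a..a + 1, f x) / a) := by
  have hfx := hfi.div_self_of_pos ha (by linarith)
  rw [← intervalIntegral.integral_div, ← intervalIntegral.integral_div]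
  constructor
  · refine intervalIntegral.integral_mono_on (by linarith) (hfi.div_const _) hfx fun x hx => ?_
    exact div_le_div_of_nonneg_left (hf x) (ha.trans_le hx.1) hx.2
  · refine intervalIntegral.integral_mono_on (by linarith) hfx (hfi.div_const _) fun x hx => ?_
    exact div_le_div_of_nonneg_left (hf x) ha hx.1

theorem abs_integral_sub_div_self_le {a : ℝ} (ha : 0 < a) (hf : ∀ x, 0 ≤ f x)
    (hfi : IntervalIntegrable f volume a (a + 1)) (hc : ∫ x in a..a + 1, f x = c) :
    |∫ x in a..a + 1, (f x - c) / x| ≤ c / a - c / (a + 1) := by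
  have hconst : IntervalIntegrable (fun _ => c) volume a (a + 1) := intervalIntegrable_const
  have hc0 : 0 ≤ c := hc ▸ intervalIntegral.integral_nonneg (by linarith) fun x _ => hf x
  have hf' := integral_div_self_mem_Icc ha hf hfi
  have hc' := integral_div_self_mem_Icc ha (fun _ => hc0) hconst
  rw [hc] at hf'
  rw [intervalIntegral.integral_const, add_sub_cancel_left, one_smul] at hc'
  simp only [sub_div]
  rw [intervalIntegral.integral_sub (hfi.div_self_of_pos ha (by linarith))
    (hconst.div_self_of_pos ha (by linarith)), ← Real.dist_eq]
  exact Real.dist_le_of_mem_Icc hf' hc'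

theorem abs_integral_div_self_sub_mul_log_le (hf : ∀ x, 0 ≤ f x)
    (hfi : ∀ a b, IntervalIntegrable f volume a b) (hc : ∀ k : ℕ, ∫ x in k..k + 1, f x = c)
    {m : ℕ} (hm : 1 ≤ m) : |(∫ x in 1..m, f x / x) - c * log m| ≤ c := by
  have hg (a b : ℝ) (ha : 0 < a) (hb : 0 < b) :
      IntervalIntegrable (fun x => (f x - c) / x) volume a b :=
    ((hfi a b).sub intervalIntegrable_const).div_self_of_pos ha hb
  have hc0 : 0 ≤ c := hc 0 ▸ intervalIntegral.integral_nonneg (by simp) fun x _ => hf x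
  have telescope : ∀ m : ℕ, 1 ≤ m → |∫ x in 1..m, (f x - c) / x| ≤ c - c / m := by
    intro m hm
    induction m, hm using Nat.le_induction with
    | base => simp
    | succ m hm ih =>
      have hm0 : (0 : ℝ) < m := Nat.cast_pos.2 hm
      push_cast
      rw [← intervalIntegral.integral_add_adjacent_intervals (hg 1 m one_pos hm0)
        (hg m (m + 1) hm0 (by linarith))]
      calc _ ≤ |∫ x in 1..(m : ℝ), (f x - c) / x| + |∫ x in m..(m : ℝ) + 1, (f x - c) / x| :=
            abs_add_le _ _
        _ ≤ (c - c / m) + (c / m - c / (m + 1)) :=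
            add_le_add ih (abs_integral_sub_div_self_le hm0 hf (hfi _ _) (hc m))
        _ = c - c / (m + 1) := by ring
  have hm0 : (0 : ℝ) < m := Nat.cast_pos.2 hm
  have hlog : ∫ x in (1 : ℝ)..m, c / x = c * log m := by
    simp_rw [div_eq_mul_inv]
    rw [intervalIntegral.integral_const_mul, integral_inv_of_pos one_pos hm0, div_one]
  have h := telescope m hm
  simp_rw [sub_div] at h
  rw [intervalIntegral.integral_sub ((hfi 1 m).div_self_of_pos one_pos hm0)
    (intervalIntegrable_const.div_self_of_pos (f := fun _ => c) one_pos hm0), hlog] at h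
  have : 0 ≤ c / m := by positivity
  linarith

end UnitIntervals

theorem psi_eq_fract (x : ℝ) : psi x = Int.fract x - Int.fract x ^ 2 := rfl

theorem psi_nonneg (x : ℝ) : 0 ≤ psi x := by
  rw [psi_eq_fract]
  nlinarith [Int.fract_nonneg x, Int.fract_lt_one x]

theorem psi_periodic : Function.Periodic psi 1 := fun x => by
  simp only [psi_eq_fract, Int.fract_add_one]

theorem psi_neg (x : ℝ) : psi (-x) = psi x := by
  by_cases hx : Int.fract x = 0
  · simp only [psi_eq_fract, hx, Int.fract_neg_eq_zero.2 hx]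
  · simp only [psi_eq_fract, Int.fract_neg hx]
    ring

theorem psi_le_abs (x : ℝ) : psi x ≤ |x| := by
  have key {y : ℝ} (hy : 0 ≤ y) : psi y ≤ y := by
    have : (0 : ℝ) ≤ ⌊y⌋ := Int.cast_nonneg (Int.floor_nonneg.2 hy)
    rw [psi_eq_fract, Int.fract]
    nlinarith
  rcases le_or_gt 0 x with hx | hx
  · rw [abs_of_nonneg hx]
    exact key hx
  · rw [abs_of_neg hx, ← psi_neg]
    exact key (neg_nonneg.2 hx.le)

theorem psi_natCast_sub (n : ℕ) (x : ℝ) : psi (n - x) = psi x := by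
  simpa [psi_neg] using psi_periodic.nat_mul_sub_eq n (x := x)

theorem psi_eq_of_mem_Icc {x : ℝ} (hx : x ∈ Icc (0 : ℝ) 1) : psi x = x - x ^ 2 := by
  rcases hx.2.eq_or_lt with rfl | hlt
  · simp [psi]
  · rw [psi_eq_fract, Int.fract_eq_self.2 ⟨hx.1, hlt⟩]

theorem continuous_psi : Continuous psi :=
  (continuousOn_id.sub (continuousOn_id.pow 2)).comp_fract'' (by norm_num)

theorem integral_psi_zero_one : ∫ x in (0 : ℝ)..1, psi x = 1 / 6 := by
  rw [intervalIntegral.integral_congr fun x hx =>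
    psi_eq_of_mem_Icc (uIcc_of_le (zero_le_one' ℝ) ▸ hx)]
  norm_num [integral_id, integral_pow]

theorem integral_psi_div_self_zero_one : ∫ x in (0 : ℝ)..1, psi x / x = 1 / 2 := by
  rw [intervalIntegral.integral_congr_ae (g := fun x => 1 - x) (ae_of_all _ fun x hx => ?_)]
  · rw [intervalIntegral.integral_sub intervalIntegrable_const
      intervalIntegral.intervalIntegrable_id]
    norm_num [integral_id]
  · rw [uIoc_of_le zero_le_one] at hx
    rw [psi_eq_of_mem_Icc (Ioc_subset_Icc_self hx)]
    field_simp [hx.1.ne']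

theorem intervalIntegrable_psi_div_self (a b : ℝ) :
    IntervalIntegrable (fun x => psi x / x) volume a b := by
  refine (intervalIntegrable_const (c := (1 : ℝ))).mono_fun'
    ((continuous_psi.measurable.div measurable_id).aestronglyMeasurable) (ae_of_all _ fun x => ?_)
  dsimp only
  rw [Real.norm_eq_abs, abs_div, abs_of_nonneg (psi_nonneg x)]
  exact div_le_one_of_le₀ (psi_le_abs x) (abs_nonneg x)

theorem integral_psi_div_mul_one_sub_div (n : ℕ) :
    ∫ x in (0 : ℝ)..(n / 2), psi x / (x * (1 - x / n)) = ∫ x in (0 : ℝ)..n, psi x / x := by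
  have hpartial : ∀ x ∈ uIoc (0 : ℝ) (n / 2),
      psi x / (x * (1 - x / n)) = psi x / x + psi (n - x) / (n - x) := by
    intro x hx
    rw [uIoc_of_le (by positivity)] at hx
    have hn : (0 : ℝ) < n := by linarith [hx.1, hx.2]
    have hnx : (n : ℝ) - x ≠ 0 := by linarith [hx.1, hx.2]
    rw [psi_natCast_sub]
    field_simp [hx.1.ne', hn.ne']
    ring
  have hreflect : IntervalIntegrable (fun x => psi (n - x) / (n - x)) volume 0 (n / 2) := by
    simpa using (intervalIntegrable_psi_div_self (n - 0) (n - n / 2)).comp_sub_left n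
  rw [intervalIntegral.integral_congr_ae (ae_of_all _ hpartial),
    intervalIntegral.integral_add (intervalIntegrable_psi_div_self _ _) hreflect,
    intervalIntegral.integral_comp_sub_left (fun x => psi x / x), sub_zero, sub_half,
    intervalIntegral.integral_add_adjacent_intervals (intervalIntegrable_psi_div_self _ _)
      (intervalIntegrable_psi_div_self _ _)]

theorem stmt11 :
    Tendsto (fun n : ℕ =>
        (Real.log n)⁻¹ * ∫ x in (0:ℝ)..(n / 2), psi x / (x * (1 - x / n)))
      atTop (nhds (1/6)) := by
  refine tendsto_inv_mul_of_abs_sub_mul_le (C := 2 / 3)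
    (tendsto_log_atTop.comp tendsto_natCast_atTop_atTop) ?_
  filter_upwards [eventually_ge_atTop 1] with n hn
  have htail := abs_integral_div_self_sub_mul_log_le psi_nonneg
    continuous_psi.intervalIntegrable (fun k => by
      rw [psi_periodic.intervalIntegral_add_eq k 0, zero_add, integral_psi_zero_one]) hn
  rw [integral_psi_div_mul_one_sub_div,
    ← intervalIntegral.integral_add_adjacent_intervals (intervalIntegrable_psi_div_self 0 1)
      (intervalIntegrable_psi_div_self 1 n), integral_psi_div_self_zero_one]
  rw [abs_le] at htail ⊢
  constructor <;> linarith [htail.1, htail.2]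
end

section
/- Let g₁(a,b) be as defined below. Then: (i) for every b > 0 with b ≠ 1, g₁(0,b) = log b / (π²(b²−1)); (ii) for every a ≥ 0 and b > 0 with b ≠ 1, g₁(a,b) ≤ log b / (π²(b²−1)); (iii) for every fixed a ≥ 0, lim_{b→∞} (π² b² / log b) · g₁(a,b) = 1. -/
open MeasureTheory Real Filter

noncomputable def g1 (a b : ℝ) : ℝ :=
  (1 / π ^ 2) * ∫ x in Set.Ioi (0:ℝ), x / ((1 + x ^ 2) * (1 + (a + b * x) ^ 2))

/-!
The integral `∫₀^∞ x dx / ((1 + x²)(C + D x²))` has the closed form `log (D / C) / (2 (D - C))`,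
with primitive `(log (C + D x²) - log (1 + x²)) / (2 (D - C))`; for `a = 0` this is (i).
Since `(a + b x)² ≥ b² x²`, `g₁(a, b) ≤ g₁(0, b)`, which gives (ii) and the upper half of (iii).
For the lower half, Young's inequality with weight `t = log b` gives
`1 + (a + b x)² ≤ (1 + a²)(1 + t) + b² (1 + 1/t) x²`, and the closed form for these coefficients
is still `~ log b / b²`: the price `log (1 + a²) + log log b` paid in the logarithm is `o(log b)`.
-/

open Set Topology

theorem div_one_add_sq_mul_le {x p q : ℝ} (hx : 0 ≤ x) (hp : 0 < p) (hpq : p ≤ q) :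
    x / ((1 + x ^ 2) * q) ≤ x / ((1 + x ^ 2) * p) :=
  div_le_div_of_nonneg_left hx (by positivity) (by gcongr)

section Comparison

variable {p q : ℝ → ℝ}

theorem integrableOn_Ioi_div_one_add_sq_mul_of_le (hq : Measurable q)
    (hp : ∀ x ∈ Ioi (0 : ℝ), 0 < p x) (hpq : ∀ x ∈ Ioi (0 : ℝ), p x ≤ q x)
    (hi : IntegrableOn (fun x => x / ((1 + x ^ 2) * p x)) (Ioi 0)) :
    IntegrableOn (fun x => x / ((1 + x ^ 2) * q x)) (Ioi 0) := by
  refine hi.mono' (by fun_prop : Measurable _).aestronglyMeasurable <|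
    (ae_restrict_iff' measurableSet_Ioi).2 (ae_of_all _ fun x (hx : 0 < x) => ?_)
  have hq0 : 0 < q x := (hp x hx).trans_le (hpq x hx)
  rw [Real.norm_of_nonneg (by positivity)]
  exact div_one_add_sq_mul_le hx.le (hp x hx) (hpq x hx)

theorem setIntegral_Ioi_div_one_add_sq_mul_le
    (hp : ∀ x ∈ Ioi (0 : ℝ), 0 < p x) (hpq : ∀ x ∈ Ioi (0 : ℝ), p x ≤ q x)
    (hi : IntegrableOn (fun x => x / ((1 + x ^ 2) * p x)) (Ioi 0)) :
    ∫ x in Ioi 0, x / ((1 + x ^ 2) * q x) ≤ ∫ x in Ioi 0, x / ((1 + x ^ 2) * p x) := by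
  refine integral_mono_of_nonneg ?_ hi ?_ <;>
    refine (ae_restrict_iff' measurableSet_Ioi).2 (ae_of_all _ fun x (hx : 0 < x) => ?_)
  · have hq0 : 0 < q x := (hp x hx).trans_le (hpq x hx)
    exact (by positivity : 0 ≤ x / ((1 + x ^ 2) * q x))
  · exact div_one_add_sq_mul_le hx.le (hp x hx) (hpq x hx)

end Comparison

section ClosedForm

variable {C D : ℝ}

theorem hasDerivAt_log_sub_log_div (hC : 0 < C) (hD : 0 ≤ D) (hDC : D ≠ C) (x : ℝ) :
    HasDerivAt (fun x => (log (C + D * x ^ 2) - log (1 + x ^ 2)) / (2 * (D - C)))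
      (x / ((1 + x ^ 2) * (C + D * x ^ 2))) x := by
  have hCD : 0 < C + D * x ^ 2 := by positivity
  have hsub : D - C ≠ 0 := sub_ne_zero.2 hDC
  have hnum := ((((hasDerivAt_pow 2 x).const_mul D).const_add C).log hCD.ne').sub
    (((hasDerivAt_pow 2 x).const_add 1).log (by positivity))
  refine (hnum.div_const (2 * (D - C))).congr_deriv ?_
  field_simp
  ring

theorem tendsto_log_sub_log_div_atTop (hC : 0 < C) (hD : 0 < D) :
    Tendsto (fun x => (log (C + D * x ^ 2) - log (1 + x ^ 2)) / (2 * (D - C))) atTop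
      (𝓝 (log D / (2 * (D - C)))) := by
  have hratio : Tendsto (fun x : ℝ => (C * (x ^ 2)⁻¹ + D) / ((x ^ 2)⁻¹ + 1)) atTop (𝓝 D) := by
    have hinv := (tendsto_pow_atTop (two_ne_zero (α := ℕ))).inv_tendsto_atTop (α := ℝ)
    have : Tendsto (fun x : ℝ => (C * (x ^ 2)⁻¹ + D) / ((x ^ 2)⁻¹ + 1)) atTop
        (𝓝 ((C * 0 + D) / (0 + 1))) :=
      ((hinv.const_mul C).add_const D).div (hinv.add_const 1) (by norm_num)
    simpa using this
  refine (((continuousAt_log hD.ne').tendsto.comp hratio).div_const _).congr' ?_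
  filter_upwards [eventually_ne_atTop 0] with x hx
  have h2 : (C * (x ^ 2)⁻¹ + D) / ((x ^ 2)⁻¹ + 1) = (C + D * x ^ 2) / (1 + x ^ 2) := by
    field_simp
  simp only [Function.comp_apply, h2]
  rw [log_div (by positivity) (by positivity)]

theorem integral_Ioi_div_one_add_sq_mul (hC : 0 < C) (hD : 0 < D) (hDC : D ≠ C) :
    ∫ x in Ioi 0, x / ((1 + x ^ 2) * (C + D * x ^ 2)) = log (D / C) / (2 * (D - C)) := by
  rw [integral_Ioi_of_hasDerivAt_of_nonneg'
    (fun x _ => hasDerivAt_log_sub_log_div hC hD.le hDC x)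
    (fun x (hx : 0 < x) => by positivity) (tendsto_log_sub_log_div_atTop hC hD),
    log_div hD.ne' hC.ne']
  simp only [ne_eq, OfNat.ofNat_ne_zero, not_false_eq_true, zero_pow, mul_zero, add_zero, log_one]
  ring

theorem integrableOn_Ioi_div_one_add_sq_mul_of_ne (hC : 0 < C) (hD : 0 < D) (hDC : D ≠ C) :
    IntegrableOn (fun x => x / ((1 + x ^ 2) * (C + D * x ^ 2))) (Ioi 0) :=
  integrableOn_Ioi_deriv_of_nonneg' (fun x _ => hasDerivAt_log_sub_log_div hC hD.le hDC x)
    (fun x (hx : 0 < x) => by positivity) (tendsto_log_sub_log_div_atTop hC hD)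

theorem integrableOn_Ioi_div_one_add_sq_mul (hC : 0 < C) (hD : 0 < D) :
    IntegrableOn (fun x => x / ((1 + x ^ 2) * (C + D * x ^ 2))) (Ioi 0) := by
  set m := min C D
  have hm : 0 < m := lt_min hC hD
  -- compare with the coefficients `(m / 2, m)`: they differ, so the closed form is available
  refine integrableOn_Ioi_div_one_add_sq_mul_of_le (p := fun x => m / 2 + m * x ^ 2)
    (by fun_prop) (fun x _ => by positivity) (fun x _ => ?_)
    (integrableOn_Ioi_div_one_add_sq_mul_of_ne (half_pos hm) hm (by linarith))
  have := min_le_left C D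
  have := min_le_right C D
  nlinarith [sq_nonneg x]

end ClosedForm

section G1

variable {a b : ℝ}

theorem pi_sq_mul_g1 (a b : ℝ) :
    π ^ 2 * g1 a b = ∫ x in Ioi 0, x / ((1 + x ^ 2) * (1 + (a + b * x) ^ 2)) := by
  rw [g1, ← mul_assoc, mul_one_div_cancel (by positivity), one_mul]

theorem one_add_sq_mul_sq_le (ha : 0 ≤ a) (hb : 0 ≤ b) {x : ℝ} (hx : 0 ≤ x) :
    1 + b ^ 2 * x ^ 2 ≤ 1 + (a + b * x) ^ 2 := by
  nlinarith [mul_nonneg (mul_nonneg ha hb) hx]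

theorem integrableOn_Ioi_g1_integrand (ha : 0 ≤ a) (hb : 0 < b) :
    IntegrableOn (fun x => x / ((1 + x ^ 2) * (1 + (a + b * x) ^ 2))) (Ioi 0) :=
  integrableOn_Ioi_div_one_add_sq_mul_of_le (by fun_prop) (fun x _ => by positivity)
    (fun x hx => one_add_sq_mul_sq_le ha hb.le (le_of_lt hx))
    (integrableOn_Ioi_div_one_add_sq_mul one_pos (by positivity))

theorem g1_zero (hb : 0 < b) (hb1 : b ≠ 1) : g1 0 b = log b / (π ^ 2 * (b ^ 2 - 1)) := by
  have hb2 : b ^ 2 ≠ 1 := fun h => hb1 (by nlinarith)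
  have hb21 : b ^ 2 - 1 ≠ 0 := sub_ne_zero.2 hb2
  have h := integral_Ioi_div_one_add_sq_mul one_pos (pow_pos hb 2) hb2
  rw [g1]
  simp only [zero_add, mul_pow]
  rw [h, div_one, log_pow]
  field_simp
  ring

theorem g1_le_g1_zero (ha : 0 ≤ a) (hb : 0 < b) : g1 a b ≤ g1 0 b := by
  have h := setIntegral_Ioi_div_one_add_sq_mul_le (fun x _ => by positivity)
    (fun x hx => one_add_sq_mul_sq_le ha hb.le (le_of_lt hx))
    (integrableOn_Ioi_div_one_add_sq_mul one_pos (pow_pos hb 2))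
  rw [g1, g1]
  simp only [zero_add, mul_pow]
  gcongr

theorem one_add_sq_le (a b x : ℝ) {t : ℝ} (ht : 0 < t) :
    1 + (a + b * x) ^ 2 ≤ (1 + a ^ 2) * (1 + t) + b ^ 2 * (1 + t⁻¹) * x ^ 2 := by
  have hyoung : 2 * a * b * x ≤ a ^ 2 * t + b ^ 2 * x ^ 2 / t := by
    rw [← sub_nonneg]
    have : a ^ 2 * t + b ^ 2 * x ^ 2 / t - 2 * a * b * x = (a * t - b * x) ^ 2 / t := by
      field_simp
      ring
    rw [this]
    positivity
  have : b ^ 2 * (1 + t⁻¹) * x ^ 2 = b ^ 2 * x ^ 2 + b ^ 2 * x ^ 2 / t := by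
    field_simp
  nlinarith

theorem g1_nonneg (a b : ℝ) : 0 ≤ g1 a b :=
  mul_nonneg (by positivity) <| setIntegral_nonneg measurableSet_Ioi fun x (hx : 0 < x) => by
    positivity

theorem log_div_le_pi_sq_mul_g1 (ha : 0 ≤ a) (hb : 0 < b) {t : ℝ} (ht : 0 < t) :
    log (b ^ 2 * (1 + t⁻¹) / ((1 + a ^ 2) * (1 + t))) /
      (2 * (b ^ 2 * (1 + t⁻¹) - (1 + a ^ 2) * (1 + t))) ≤ π ^ 2 * g1 a b := by
  rcases eq_or_ne (b ^ 2 * (1 + t⁻¹)) ((1 + a ^ 2) * (1 + t)) with hDC | hDC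
  · rw [hDC, sub_self, mul_zero, div_zero]
    exact mul_nonneg (by positivity) (g1_nonneg a b)
  rw [pi_sq_mul_g1, ← integral_Ioi_div_one_add_sq_mul (by positivity) (by positivity) hDC]
  exact setIntegral_Ioi_div_one_add_sq_mul_le (fun x _ => by positivity)
    (fun x _ => one_add_sq_le a b x ht) (integrableOn_Ioi_g1_integrand ha hb)

end G1

section Asymptotics

theorem tendsto_sq_div_sq_sub {f : ℝ → ℝ} (hf : Tendsto (fun b => f b / b ^ 2) atTop (𝓝 0)) :
    Tendsto (fun b => b ^ 2 / (b ^ 2 - f b)) atTop (𝓝 1) := by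
  have h := (tendsto_const_nhds (x := (1 : ℝ))).sub hf |>.inv₀ (by norm_num)
  rw [sub_zero, inv_one] at h
  refine h.congr' ?_
  filter_upwards [eventually_ne_atTop 0] with b hb
  rw [one_sub_div (pow_ne_zero 2 hb), inv_div]

theorem tendsto_log_div_self_atTop : Tendsto (fun x => log x / x) atTop (𝓝 0) :=
  isLittleO_log_id_atTop.tendsto_div_nhds_zero

theorem tendsto_log_div_sq_atTop : Tendsto (fun x => log x / x ^ 2) atTop (𝓝 0) := by
  have h := tendsto_log_div_self_atTop.mul tendsto_inv_atTop_zero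
  rw [zero_mul] at h
  exact h.congr fun x => by ring

theorem tendsto_two_mul_sub_log_div (k : ℝ) :
    Tendsto (fun y => (2 * y - log k - log y) / (2 * (1 + y))) atTop (𝓝 1) := by
  have h : Tendsto (fun y => (2 - log k * y⁻¹ - log y / y) / (2 * (y⁻¹ + 1))) atTop
      (𝓝 ((2 - log k * 0 - 0) / (2 * (0 + 1)))) :=
    ((tendsto_const_nhds.sub (tendsto_inv_atTop_zero.const_mul _)).sub
      tendsto_log_div_self_atTop).div
      ((tendsto_inv_atTop_zero.add_const 1).const_mul 2) (by norm_num)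
  norm_num at h
  refine h.congr' ?_
  filter_upwards [eventually_gt_atTop 0] with y hy
  field_simp

theorem tendsto_sq_div_log_mul_log_div {k : ℝ} (hk : 0 < k) :
    Tendsto (fun b => b ^ 2 / log b * (log (b ^ 2 * (1 + (log b)⁻¹) / (k * (1 + log b))) /
      (2 * (b ^ 2 * (1 + (log b)⁻¹) - k * (1 + log b))))) atTop (𝓝 1) := by
  have hsmall : Tendsto (fun b => k * log b / b ^ 2) atTop (𝓝 0) := by
    simpa [mul_div_assoc] using tendsto_log_div_sq_atTop.const_mul k
  have h := (tendsto_sq_div_sq_sub hsmall).mul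
    ((tendsto_two_mul_sub_log_div k).comp tendsto_log_atTop)
  rw [one_mul] at h
  refine h.congr' ?_
  filter_upwards [eventually_gt_atTop 1, hsmall.eventually (gt_mem_nhds one_pos)] with b hb hkL
  have hL : 0 < log b := log_pos hb
  have hb0 : 0 < b := by linarith
  have hsub : 0 < b ^ 2 - k * log b := by
    rw [div_lt_one (by positivity)] at hkL
    linarith
  have hD : b ^ 2 * (1 + (log b)⁻¹) / (k * (1 + log b)) = b ^ 2 / (k * log b) := by
    field_simp
    ring
  have hDC : b ^ 2 * (1 + (log b)⁻¹) - k * (1 + log b) =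
      (1 + log b) * (b ^ 2 - k * log b) / log b := by
    field_simp
    ring
  rw [Function.comp_apply, hD, log_div (by positivity) (by positivity),
    log_mul hk.ne' hL.ne', log_pow, hDC]
  field_simp
  ring

end Asymptotics

theorem tendsto_pi_sq_mul_sq_div_log_mul_g1 {a : ℝ} (ha : 0 ≤ a) :
    Tendsto (fun b : ℝ => π ^ 2 * b ^ 2 / log b * g1 a b) atTop (𝓝 1) := by
  have hinv_sq : Tendsto (fun b : ℝ => 1 / b ^ 2) atTop (𝓝 0) :=
    (tendsto_pow_atTop two_ne_zero).inv_tendsto_atTop.congr fun b => by simp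
  refine tendsto_of_tendsto_of_tendsto_of_le_of_le'
    (tendsto_sq_div_log_mul_log_div (by positivity : 0 < 1 + a ^ 2))
    (tendsto_sq_div_sq_sub hinv_sq) ?_ ?_ <;>
    filter_upwards [eventually_gt_atTop 1] with b hb <;>
    have hL : 0 < log b := log_pos hb
  · calc _ ≤ b ^ 2 / log b * (π ^ 2 * g1 a b) := by
          gcongr
          exact log_div_le_pi_sq_mul_g1 ha (by linarith) hL
      _ = π ^ 2 * b ^ 2 / log b * g1 a b := by ring
  · have hb21 : b ^ 2 - 1 ≠ 0 := by nlinarith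
    calc π ^ 2 * b ^ 2 / log b * g1 a b ≤ π ^ 2 * b ^ 2 / log b * g1 0 b := by
          gcongr
          exact g1_le_g1_zero ha (by linarith)
      _ = b ^ 2 / (b ^ 2 - 1) := by
          rw [g1_zero (by linarith) hb.ne']
          field_simp

theorem stmt14 :
    (∀ b : ℝ, 0 < b → b ≠ 1 → g1 0 b = Real.log b / (π ^ 2 * (b ^ 2 - 1))) ∧
    (∀ a b : ℝ, 0 ≤ a → 0 < b → b ≠ 1 →
      g1 a b ≤ Real.log b / (π ^ 2 * (b ^ 2 - 1))) ∧
    (∀ a : ℝ, 0 ≤ a →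
      Tendsto (fun b : ℝ => π ^ 2 * b ^ 2 / Real.log b * g1 a b) atTop (nhds 1)) :=
  ⟨fun _ hb hb1 => g1_zero hb hb1,
    fun _ _ ha hb hb1 => (g1_le_g1_zero ha hb).trans_eq (g1_zero hb hb1),
    fun _ ha => tendsto_pi_sq_mul_sq_div_log_mul_g1 ha⟩
end
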